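/- Let (q_k)_{k≥2} be an increasing sequence of positive reals with q_2 ≥ 3 and lim_{n→∞} q_n = c < q_∞, and let R_5(z) := Σ_{k=5}^∞ (-1)^k z^k / (q_2^{k-1} q_3^{k-2} ⋯ q_{k-1}² q_k). Then max_{0 ≤ θ ≤ 2π} |R_5(q_2 e^{iθ})| ≤ q_2 / (q_3³ q_4³ - q_3²). -/

import Mathlib

open Filter Finset

/-- The Laguerre–Pólya class: `f(x) = c xⁿ e^{-αx²+βx} ∏ₖ (1 - x/xₖ) e^{x/xₖ}`,
with `α ≥ 0`, `xₖ ≠ 0`, `∑ xₖ⁻² < ∞`; the product is over an arbitrary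
(possibly finite or empty) index set `I ⊆ ℕ`. -/
def LaguerrePolya (f : ℝ → ℝ) : Prop :=
  ∃ (c α β : ℝ) (n : ℕ) (I : Set ℕ) (x : ℕ → ℝ),
    0 ≤ α ∧ (∀ k ∈ I, x k ≠ 0) ∧
    Summable (fun k : I => ((x k)⁻¹) ^ 2) ∧
    ∀ t : ℝ, f t = c * t ^ n * Real.exp (-α * t ^ 2 + β * t) *
      ∏' k : I, ((1 - t / x (k : ℕ)) * Real.exp (t / x (k : ℕ)))

/-- `q_∞ := inf {a² : a > 1, g_a ∈ L-P}` where `g_a(x) = ∑ⱼ xʲ a^{-j²}`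
is the partial theta function. -/
noncomputable def qInfty : ℝ :=
  sInf {s : ℝ | ∃ a : ℝ, 1 < a ∧ s = a ^ 2 ∧
    LaguerrePolya (fun x => ∑' j : ℕ, x ^ j / a ^ (j ^ 2))}

/-- `phiDenom q k = q_2^{k-1} q_3^{k-2} ⋯ q_{k-1}² q_k = ∏_{j=2}^{k} q_j^{k+1-j}`
(equal to `1` for `k = 0, 1`), the denominator of the `k`-th Taylor coefficient of `φ`. -/
def phiDenom (q : ℕ → ℝ) (k : ℕ) : ℝ := ∏ j ∈ Finset.Icc 2 k, q j ^ (k + 1 - j)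

/-!
On the circle `|z| = q₂` the `k`-th term of `R₅` has modulus `q₂ᵏ / phiDenom q k`. Passing from
`k` to `k + 1` multiplies this by `q₂ / (q₂ q₃ ⋯ q_{k+1})`, which for `k ≥ 5` is at most
`1 / (q₃ q₄³)` by monotonicity, while the term `k = 5` is at most `q₂ / (q₃³ q₄³)`. Comparing with
a geometric series gives `q₂ / (q₃³ q₄³) · 1 / (1 - 1 / (q₃ q₄³)) = q₂ / (q₃³ q₄³ - q₃²)`.
-/

lemma phiDenom_succ (q : ℕ → ℝ) (n : ℕ) :
    phiDenom q (n + 1) = phiDenom q n * ∏ j ∈ Icc 2 (n + 1), q j := by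
  rcases Nat.eq_zero_or_pos n with rfl | hn
  · simp [phiDenom]
  unfold phiDenom
  rw [prod_Icc_succ_top (by omega : 2 ≤ n + 1), prod_Icc_succ_top (by omega : 2 ≤ n + 1),
    Nat.add_sub_cancel_left, pow_one, ← mul_assoc, ← prod_mul_distrib]
  congr 1
  refine prod_congr rfl fun j hj => ?_
  rw [← pow_succ, show n + 1 + 1 - j = n + 1 - j + 1 by grind]

lemma phiDenom_five (q : ℕ → ℝ) : phiDenom q 5 = q 2 ^ 4 * q 3 ^ 3 * q 4 ^ 2 * q 5 := by
  simp [phiDenom, show Icc 2 5 = {2, 3, 4, 5} from rfl, mul_assoc]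

lemma phiDenom_pos {q : ℕ → ℝ} (hq : ∀ j, 2 ≤ j → 0 < q j) (k : ℕ) : 0 < phiDenom q k :=
  prod_pos fun j hj => pow_pos (hq j (mem_Icc.1 hj).1) _

lemma norm_neg_one_pow_mul_pow_div (z : ℂ) {d : ℝ} (hd : 0 ≤ d) (k : ℕ) :
    ‖(-1 : ℂ) ^ k * z ^ k / (d : ℂ)‖ = ‖z‖ ^ k / d := by
  simp [Complex.norm_real, abs_of_nonneg hd]

section Monotone

variable {q : ℕ → ℝ}

lemma three_le_of_monotoneOn (hmono : MonotoneOn q (Set.Ici 2)) (hq2 : 3 ≤ q 2) {j : ℕ}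
    (hj : 2 ≤ j) : 3 ≤ q j :=
  hq2.trans (hmono (Set.mem_Ici.2 le_rfl) hj hj)

lemma one_lt_mul_pow_three (hmono : MonotoneOn q (Set.Ici 2)) (hq2 : 3 ≤ q 2) :
    1 < q 3 * q 4 ^ 3 := by
  have h3 := three_le_of_monotoneOn hmono hq2 (j := 3) (by norm_num)
  have h4 := three_le_of_monotoneOn hmono hq2 (j := 4) (by norm_num)
  exact one_lt_mul_of_le_of_lt (by linarith) (one_lt_pow₀ (by linarith) three_ne_zero)

lemma mul_pow_le_prod_Icc (hmono : MonotoneOn q (Set.Ici 2)) (hq2 : 1 ≤ q 2) {n : ℕ}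
    (hn : 6 ≤ n) : q 2 * q 3 * q 4 ^ 3 ≤ ∏ j ∈ Icc 2 n, q j := by
  have hq : ∀ i j, 2 ≤ i → i ≤ j → q i ≤ q j := fun i j hi hij => hmono hi (hi.trans hij) hij
  have hone : ∀ j, 2 ≤ j → 1 ≤ q j := fun j hj => hq2.trans (hq 2 j le_rfl hj)
  calc q 2 * q 3 * q 4 ^ 3 = ∏ j ∈ Icc 2 6, q (min j 4) := by
        simp [show Icc 2 6 = {2, 3, 4, 5, 6} from rfl]
        ring
    _ ≤ ∏ j ∈ Icc 2 6, q j :=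
        prod_le_prod (fun j hj => zero_le_one.trans (hone _ (by grind)))
          fun j hj => hq _ _ (by grind) (min_le_left j 4)
    _ ≤ ∏ j ∈ Icc 2 n, q j :=
        prod_le_prod_of_subset_of_one_le (Icc_subset_Icc le_rfl hn)
          (fun j hj => zero_le_one.trans (hone j (mem_Icc.1 hj).1))
          fun j hj _ => hone j (mem_Icc.1 hj).1

lemma pow_div_phiDenom_succ_le (hmono : MonotoneOn q (Set.Ici 2)) (hq2 : 3 ≤ q 2) {n : ℕ}
    (hn : 5 ≤ n) :
    q 2 ^ (n + 1) / phiDenom q (n + 1) ≤ (q 3 * q 4 ^ 3)⁻¹ * (q 2 ^ n / phiDenom q n) := by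
  have hq : ∀ j, 2 ≤ j → 0 < q j := fun j hj =>
    three_pos.trans_le (three_le_of_monotoneOn hmono hq2 hj)
  have hP := mul_pow_le_prod_Icc hmono (by linarith) (show 6 ≤ n + 1 by omega)
  have h2 := hq 2 le_rfl
  have h3 := hq 3 (by norm_num)
  have h4 := hq 4 (by norm_num)
  calc q 2 ^ (n + 1) / phiDenom q (n + 1)
      = q 2 / (∏ j ∈ Icc 2 (n + 1), q j) * (q 2 ^ n / phiDenom q n) := by
        rw [phiDenom_succ, pow_succ]
        ring
    _ ≤ q 2 / (q 2 * q 3 * q 4 ^ 3) * (q 2 ^ n / phiDenom q n) := by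
        have := phiDenom_pos hq n
        gcongr
    _ = (q 3 * q 4 ^ 3)⁻¹ * (q 2 ^ n / phiDenom q n) := by
        field_simp

lemma pow_five_div_phiDenom_five_le (hmono : MonotoneOn q (Set.Ici 2)) (hq2 : 3 ≤ q 2) :
    q 2 ^ 5 / phiDenom q 5 ≤ q 2 / (q 3 ^ 3 * q 4 ^ 3) := by
  have h2 : 0 < q 2 := by linarith
  have h3 := three_le_of_monotoneOn hmono hq2 (j := 3) (by norm_num)
  have h4 := three_le_of_monotoneOn hmono hq2 (j := 4) (by norm_num)
  have h45 : q 4 ≤ q 5 := hmono (by norm_num) (by norm_num) (by norm_num)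
  calc q 2 ^ 5 / phiDenom q 5 = q 2 / (q 3 ^ 3 * q 4 ^ 2 * q 5) := by
        rw [phiDenom_five]
        field_simp
    _ ≤ q 2 / (q 3 ^ 3 * q 4 ^ 2 * q 4) := by
        have : 0 < q 3 ^ 3 * q 4 ^ 2 * q 4 := by positivity
        gcongr
    _ = q 2 / (q 3 ^ 3 * q 4 ^ 3) := by ring

lemma pow_div_phiDenom_le_geometric (hmono : MonotoneOn q (Set.Ici 2)) (hq2 : 3 ≤ q 2)
    (k : ℕ) :
    q 2 ^ (k + 5) / phiDenom q (k + 5) ≤ q 2 / (q 3 ^ 3 * q 4 ^ 3) * (q 3 * q 4 ^ 3)⁻¹ ^ k := by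
  have hr : 0 ≤ (q 3 * q 4 ^ 3)⁻¹ :=
    (inv_pos.2 (zero_lt_one.trans (one_lt_mul_pow_three hmono hq2))).le
  calc q 2 ^ (k + 5) / phiDenom q (k + 5)
      ≤ (q 3 * q 4 ^ 3)⁻¹ ^ k * (q 2 ^ (0 + 5) / phiDenom q (0 + 5)) :=
      le_geom (u := fun k => q 2 ^ (k + 5) / phiDenom q (k + 5)) hr k
        fun i _ => pow_div_phiDenom_succ_le hmono hq2 (by omega)
    _ ≤ (q 3 * q 4 ^ 3)⁻¹ ^ k * (q 2 / (q 3 ^ 3 * q 4 ^ 3)) :=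
        mul_le_mul_of_nonneg_left (pow_five_div_phiDenom_five_le hmono hq2) (pow_nonneg hr k)
    _ = q 2 / (q 3 ^ 3 * q 4 ^ 3) * (q 3 * q 4 ^ 3)⁻¹ ^ k := mul_comm _ _

end Monotone

theorem statement12_general (q : ℕ → ℝ) (hq2 : 3 ≤ q 2)
    (hmono : ∀ n : ℕ, 2 ≤ n → q n ≤ q (n + 1)) :
    ∀ θ ∈ Set.Icc (0 : ℝ) (2 * Real.pi),
      ‖(∑' k : ℕ, (-1 : ℂ) ^ (k + 5) *
          ((q 2 : ℂ) * Complex.exp (θ * Complex.I)) ^ (k + 5) / (phiDenom q (k + 5) : ℂ))‖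
        ≤ q 2 / (q 3 ^ 3 * q 4 ^ 3 - q 3 ^ 2) := by
  intro θ _
  have hmono' : MonotoneOn q (Set.Ici 2) :=
    monotoneOn_of_le_succ Set.ordConnected_Ici fun n _ hn _ => hmono n hn
  have hq : ∀ j, 2 ≤ j → 0 < q j := fun j hj =>
    three_pos.trans_le (three_le_of_monotoneOn hmono' hq2 hj)
  have hr := one_lt_mul_pow_three hmono' hq2
  have hgeom := hasSum_geometric_of_lt_one (inv_pos.2 (zero_lt_one.trans hr)).le
    (inv_lt_one_of_one_lt₀ hr)
  have hz : ‖(q 2 : ℂ) * Complex.exp (θ * Complex.I)‖ = q 2 := by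
    rw [norm_mul, Complex.norm_exp_ofReal_mul_I, Complex.norm_real, Real.norm_of_nonneg
      (hq 2 le_rfl).le, mul_one]
  calc _ ≤ q 2 / (q 3 ^ 3 * q 4 ^ 3) * (1 - (q 3 * q 4 ^ 3)⁻¹)⁻¹ :=
        tsum_of_norm_bounded (hgeom.mul_left _) fun k => by
            rw [norm_neg_one_pow_mul_pow_div _ (phiDenom_pos hq _).le, hz]
            exact pow_div_phiDenom_le_geometric hmono' hq2 k
    _ = q 2 / (q 3 ^ 3 * q 4 ^ 3 - q 3 ^ 2) := by
        have h3 := (hq 3 (by norm_num)).ne'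
        have h4 := (hq 4 (by norm_num)).ne'
        have : q 3 * q 4 ^ 3 - 1 ≠ 0 := by linarith
        field_simp

/-- Lemma 4: for an increasing sequence of positive reals `(q_k)_{k≥2}`
with `q₂ ≥ 3` and `qₙ → c < q_∞`, the tail `R₅(z) = ∑_{k≥5} (-1)ᵏ zᵏ/(q₂^{k-1}⋯q_k)`
satisfies `max_{0≤θ≤2π} |R₅(q₂ e^{iθ})| ≤ q₂/(q₃³q₄³ - q₃²)`. -/
theorem statement12 (q : ℕ → ℝ) (hq : ∀ n, 2 ≤ n → 0 < q n) (hq2 : 3 ≤ q 2)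
    (hmono : ∀ n : ℕ, 2 ≤ n → q n ≤ q (n + 1)) (c : ℝ)
    (hlim : Tendsto q atTop (nhds c)) (hc : c < qInfty) :
    ∀ θ ∈ Set.Icc (0 : ℝ) (2 * Real.pi),
      ‖(∑' k : ℕ, (-1 : ℂ) ^ (k + 5) *
          ((q 2 : ℂ) * Complex.exp (θ * Complex.I)) ^ (k + 5) / (phiDenom q (k + 5) : ℂ))‖
        ≤ q 2 / (q 3 ^ 3 * q 4 ^ 3 - q 3 ^ 2) :=
  statement12_general q hq2 hmono
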